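/- Let Σ be an alphabet with at least three distinct symbols, including a and b. The language Σ*abΣ* of strings containing ab as a contiguous substring is not PTL-definable, whereas the language Σ*aΣ*bΣ* of strings containing ab as a (possibly non-contiguous) subsequence is PTL-definable. -/

import Mathlib

/-- PTL formulas over alphabet `α`: atoms, conjunction, negation, and the past operator. -/
inductive PTL (α : Type*) : Type _
  | atom : α → PTL α
  | conj : PTL α → PTL α → PTL α
  | neg : PTL α → PTL α
  | past : PTL α → PTL α

/-- Satisfaction of a PTL formula in string `w` at (1-based) position `n ∈ {1,…,N+1}`. -/
def PTL.Sat {α : Type*} (w : List α) : PTL α → ℕ → Prop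
  | .atom a, n => 1 ≤ n ∧ w[n - 1]? = some a
  | .conj ψ₁ ψ₂, n => PTL.Sat w ψ₁ n ∧ PTL.Sat w ψ₂ n
  | .neg ψ, n => ¬ PTL.Sat w ψ n
  | .past ψ, n => ∃ m, 1 ≤ m ∧ m < n ∧ PTL.Sat w ψ m

/-- A string `w` of length `N` satisfies `ψ` iff `w, N+1 ⊨ ψ`. -/
def PTL.Models {α : Type*} (w : List α) (ψ : PTL α) : Prop :=
  PTL.Sat w ψ (w.length + 1)

/-- A language is PTL-definable if it is the set of strings satisfying some PTL formula. -/
def PTLDefinable {α : Type*} (L : Set (List α)) : Prop :=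
  ∃ ψ : PTL α, ∀ w : List α, w ∈ L ↔ PTL.Models w ψ

/-!
Formulas of past-depth `k` cannot tell `(ac)^k a b` from `(ac)^(k+1) b`, although only the first
contains the factor `ab`. This is an Ehrenfeucht–Fraïssé argument: with `j` nested past operators
still to evaluate, two positions carrying the same letter are indistinguishable as soon as they
coincide or both lie beyond `2j`, because every earlier position can then be matched by one of the
same letter. The subsequence language, by contrast, is defined by `P (π_b ∧ P π_a)`.
-/

namespace PTL

variable {α : Type*}

def pastDepth : PTL α → ℕ
  | .atom _ => 0
  | .conj ψ₁ ψ₂ => max ψ₁.pastDepth ψ₂.pastDepth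
  | .neg ψ => ψ.pastDepth
  | .past ψ => ψ.pastDepth + 1

/-- `R j n n'` relates positions `n` of `w` and `n'` of `w'` that no formula of past-depth at most
`j` distinguishes. -/
structure IsBackAndForth (w w' : List α) (R : ℕ → ℕ → ℕ → Prop) : Prop where
  letter {j n n' : ℕ} : R j n n' → 1 ≤ n ∧ 1 ≤ n' ∧ w[n - 1]? = w'[n' - 1]?
  forth {j n n' m : ℕ} : R (j + 1) n n' → 1 ≤ m → m < n → ∃ m', 1 ≤ m' ∧ m' < n' ∧ R j m m'
  back {j n n' m' : ℕ} : R (j + 1) n n' → 1 ≤ m' → m' < n' → ∃ m, 1 ≤ m ∧ m < n ∧ R j m m'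

namespace IsBackAndForth

variable {w w' : List α} {R : ℕ → ℕ → ℕ → Prop}

theorem sat_iff (hR : IsBackAndForth w w' R) (ψ : PTL α) :
    ∀ {j n n' : ℕ}, ψ.pastDepth ≤ j → R j n n' → (Sat w ψ n ↔ Sat w' ψ n') := by
  induction ψ with
  | atom x =>
    intro j n n' _ h
    obtain ⟨hn, hn', hletter⟩ := hR.letter h
    simp only [Sat, hn, hn', hletter, true_and]
  | conj ψ₁ ψ₂ ih₁ ih₂ =>
    intro j n n' hd h
    exact and_congr (ih₁ (le_of_max_le_left hd) h) (ih₂ (le_of_max_le_right hd) h)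
  | neg ψ ih =>
    intro j n n' hd h
    exact not_congr (ih hd h)
  | past ψ ih =>
    intro j n n' hd h
    obtain _ | j := j
    · simp [pastDepth] at hd
    have hd : ψ.pastDepth ≤ j := Nat.le_of_succ_le_succ hd
    constructor
    · rintro ⟨m, hm, hmn, hψ⟩
      obtain ⟨m', hm', hmn', h'⟩ := hR.forth h hm hmn
      exact ⟨m', hm', hmn', (ih hd h').mp hψ⟩
    · rintro ⟨m', hm', hmn', hψ⟩
      obtain ⟨m, hm, hmn, h'⟩ := hR.back h hm' hmn'
      exact ⟨m, hm, hmn, (ih hd h').mpr hψ⟩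

theorem models_iff (hR : IsBackAndForth w w' R) {ψ : PTL α} {k : ℕ} (hd : ψ.pastDepth ≤ k)
    (h : R k (w.length + 1) (w'.length + 1)) : Models w ψ ↔ Models w' ψ :=
  hR.sat_iff ψ hd h

end IsBackAndForth

theorem models_past_conj_past_iff (a b : α) (w : List α) :
    Models w (.past (.conj (.atom b) (.past (.atom a)))) ↔
      ∃ i j : ℕ, i < j ∧ w[i]? = some a ∧ w[j]? = some b := by
  simp only [Models, Sat]
  constructor
  · rintro ⟨m, -, -, ⟨-, hb⟩, l, hl, hlm, -, ha⟩
    exact ⟨l - 1, m - 1, by omega, ha, hb⟩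
  · rintro ⟨i, j, hij, ha, hb⟩
    have hj : j < w.length := (List.getElem?_eq_some_iff.mp hb).1
    exact ⟨j + 1, by omega, by omega, ⟨by omega, hb⟩, i + 1, by omega, by omega, by omega, ha⟩

end PTL

theorem not_ptlDefinable_of_isBackAndForth {α : Type*} {L : Set (List α)}
    (h : ∀ k, ∃ w ∈ L, ∃ w' ∉ L, ∃ R, PTL.IsBackAndForth w w' R ∧
      R k (w.length + 1) (w'.length + 1)) :
    ¬ PTLDefinable L := by
  rintro ⟨ψ, hψ⟩
  obtain ⟨w, hw, w', hw', R, hR, h⟩ := h ψ.pastDepth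
  exact hw' ((hψ w').mpr ((hR.models_iff le_rfl h).mp ((hψ w).mp hw)))

namespace List

variable {α : Type*} {a b : α} {w : List α}

theorem exists_eq_append_cons_cons_iff :
    (∃ u v, w = u ++ a :: b :: v) ↔ ∃ i, w[i]? = some a ∧ w[i + 1]? = some b := by
  have : (∃ u v, w = u ++ a :: b :: v) ↔ [a, b] <:+: w := by
    simp [IsInfix, eq_comm]
  rw [this, infix_iff_getElem?]
  constructor
  · rintro ⟨k, -, hk⟩
    exact ⟨k, by simpa using hk 0 (by simp), by simpa [Nat.add_comm] using hk 1 (by simp)⟩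
  · rintro ⟨i, ha, hb⟩
    have hi : i + 1 < w.length := (getElem?_eq_some_iff.mp hb).1
    refine ⟨i, by simp; omega, fun j hj => ?_⟩
    match j, hj with
    | 0, _ => simpa using ha
    | 1, _ => simpa [Nat.add_comm] using hb

theorem exists_eq_append_cons_append_cons_iff :
    (∃ u v x, w = u ++ a :: v ++ b :: x) ↔ ∃ i j : ℕ, i < j ∧ w[i]? = some a ∧ w[j]? = some b := by
  constructor
  · rintro ⟨u, v, x, rfl⟩
    exact ⟨u.length, u.length + (v.length + 1), by omega, by simp, by simp⟩
  · rintro ⟨i, j, hij, ha, hb⟩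
    have hi : i < w.length := (getElem?_eq_some_iff.mp ha).1
    have hb : b ∈ w.drop (i + 1) :=
      mem_iff_getElem?.mpr ⟨j - (i + 1), by rw [getElem?_drop, Nat.add_sub_cancel' hij]; exact hb⟩
    obtain ⟨v, x, hvx⟩ := append_of_mem hb
    refine ⟨w.take i, v, x, ?_⟩
    conv_lhs =>
      rw [← take_append_drop i w, drop_eq_getElem_cons hi, (getElem?_eq_some_iff.mp ha).2, hvx]
    simp

end List

section Alternating

variable {α : Type*} (a b c : α)

def alternatingThen (L : ℕ) : List α :=
  (List.range L).map (fun i => if i % 2 = 0 then a else c) ++ [b]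

theorem getElem?_alternatingThen (L i : ℕ) :
    (alternatingThen a b c L)[i]? =
      if i < L then some (if i % 2 = 0 then a else c) else if i = L then some b else none := by
  by_cases hi : i < L
  · simp [alternatingThen, List.getElem?_append_left, hi]
  · by_cases hiL : i = L
    · subst hiL; simp [alternatingThen]
    · simp [alternatingThen, hi, hiL]
      omega

theorem length_alternatingThen (L : ℕ) : (alternatingThen a b c L).length = L + 1 := by
  simp [alternatingThen]

variable {a b c}

theorem exists_adjacent_alternatingThen_iff (hca : c ≠ a) (hcb : c ≠ b) (L : ℕ) :
    (∃ i, (alternatingThen a b c L)[i]? = some a ∧ (alternatingThen a b c L)[i + 1]? = some b) ↔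
      L % 2 = 1 := by
  simp only [getElem?_alternatingThen]
  constructor
  · rintro ⟨i, ha, hb⟩
    by_contra hL
    split_ifs at ha hb <;> simp_all <;> omega
  · intro hL
    refine ⟨L - 1, ?_, by simp [show L - 1 + 1 = L by omega]⟩
    simp [show L - 1 < L by omega, show (L - 1) % 2 = 0 by omega]

def alternatingRel (k j n n' : ℕ) : Prop :=
  j ≤ k ∧ 1 ≤ n ∧ 1 ≤ n' ∧ (n = n' ∨ 2 * j < n ∧ 2 * j < n') ∧
    (n ≤ 2 * k + 1 ∧ n' ≤ 2 * k + 2 ∧ n % 2 = n' % 2 ∨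
      n = 2 * k + 2 ∧ n' = 2 * k + 3 ∨ n = 2 * k + 3 ∧ n' = 2 * k + 4)

variable (a b c)

theorem isBackAndForth_alternatingRel (k : ℕ) :
    PTL.IsBackAndForth (alternatingThen a b c (2 * k + 1)) (alternatingThen a b c (2 * k + 2))
      (alternatingRel k) where
  letter {j n n'} h := by
    obtain ⟨-, hn, hn', -, hmatch⟩ := h
    refine ⟨hn, hn', ?_⟩
    simp only [getElem?_alternatingThen]
    split_ifs <;> first | rfl | omega
  forth {j n n' m} h hm hmn := by
    refine ⟨if m = 2 * k + 2 then 2 * k + 3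
      else if m ≤ 2 * j ∨ n = n' then m else 2 * j + 2 - m % 2, ?_⟩
    simp only [alternatingRel] at h ⊢
    split_ifs <;> omega
  back {j n n' m'} h hm' hmn' := by
    refine ⟨if m' = 2 * k + 3 then 2 * k + 2
      else if m' ≤ 2 * j ∨ n = n' then m' else 2 * j + 2 - m' % 2, ?_⟩
    simp only [alternatingRel] at h ⊢
    split_ifs <;> omega

end Alternating

theorem substring_vs_subsequence_general {α : Type*} (a b : α)
    (h3 : ∃ c : α, c ≠ a ∧ c ≠ b) :
    ¬ PTLDefinable {w : List α | ∃ u v : List α, w = u ++ a :: b :: v} ∧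
      PTLDefinable {w : List α | ∃ u v x : List α, w = u ++ a :: v ++ b :: x} := by
  obtain ⟨c, hca, hcb⟩ := h3
  have mem_iff (L : ℕ) :
      alternatingThen a b c L ∈ {w : List α | ∃ u v : List α, w = u ++ a :: b :: v} ↔
        L % 2 = 1 := by
    rw [Set.mem_ofPred_eq, List.exists_eq_append_cons_cons_iff,
      exists_adjacent_alternatingThen_iff hca hcb]
  constructor
  · refine not_ptlDefinable_of_isBackAndForth fun k =>
      ⟨_, (mem_iff (2 * k + 1)).mpr (by omega), _, fun h => by have := (mem_iff _).mp h; omega,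
        alternatingRel k, isBackAndForth_alternatingRel a b c k, ?_⟩
    simp [length_alternatingThen, alternatingRel]
    omega
  · exact ⟨_, fun w => by
      rw [Set.mem_ofPred_eq, List.exists_eq_append_cons_append_cons_iff,
        PTL.models_past_conj_past_iff]⟩

/-- Over an alphabet with at least three symbols including `a` and `b`,
the language `Σ*abΣ*` (containing `ab` as a substring) is not PTL-definable, whereas
`Σ*aΣ*bΣ*` (containing `ab` as a subsequence) is PTL-definable. -/
theorem substring_vs_subsequence {α : Type*} [Fintype α] (a b : α) (hab : a ≠ b)
    (h3 : ∃ c : α, c ≠ a ∧ c ≠ b) :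
    ¬ PTLDefinable {w : List α | ∃ u v : List α, w = u ++ a :: b :: v} ∧
      PTLDefinable {w : List α | ∃ u v x : List α, w = u ++ a :: v ++ b :: x} :=
  substring_vs_subsequence_general a b h3
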